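/- Let Δ, D, Ψ be n×n real symmetric matrices, μ ∈ ℝ, z ∈ ℝⁿ, G = μ·Δ + Ψ + (1−μ)·D, and define f(α) = α²·zᵀ(Δ−D)z + α·zᵀ(D+Ψ−2G)z. Then the derivative of f at α = μ equals −zᵀ(Ψ+D)z; moreover, if Ψ + D is positive definite and z ≠ 0, then f′(μ) < 0. -/

import Mathlib

open Matrix

/-! The derivative `2μ·zᵀ(Δ - D)z + zᵀ(D + Ψ - 2G)z` is the quadratic form of the single matrix
`2μ(Δ - D) + D + Ψ - 2G`, in which every `μ` cancels once `G` is expanded, leaving `-(Ψ + D)`. -/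

def udpGain {R M : Type*} [Ring R] [AddCommGroup M] [Module R M] (μ : R) (Δ Ψ D : M) : M :=
  μ • Δ + Ψ + (1 - μ) • D

theorem two_mul_smul_sub_add_sub_two_smul_udpGain {R M : Type*} [CommRing R] [AddCommGroup M]
    [Module R M] (μ : R) (Δ Ψ D : M) :
    (2 * μ) • (Δ - D) + (D + Ψ - (2 : R) • udpGain μ Δ Ψ D) = -(Ψ + D) := by
  unfold udpGain
  module

theorem hasDerivAt_sq_mul_add_mul (a b x : ℝ) :
    HasDerivAt (fun α => α ^ 2 * a + α * b) (2 * x * a + b) x := by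
  simpa using ((hasDerivAt_pow 2 x).mul_const a).fun_add ((hasDerivAt_id x).mul_const b)

theorem Matrix.dotProduct_smul_add_mulVec {R n : Type*} [CommSemiring R] [Fintype n] (a : R)
    (A B : Matrix n n R) (z : n → R) :
    z ⬝ᵥ ((a • A + B) *ᵥ z) = a * (z ⬝ᵥ (A *ᵥ z)) + z ⬝ᵥ (B *ᵥ z) := by
  rw [add_mulVec, smul_mulVec, dotProduct_add, dotProduct_smul, smul_eq_mul]

theorem udp_deriv_at_nominal_mean_general {n : ℕ}
    (Δ D Ψ : Matrix (Fin n) (Fin n) ℝ)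
    (μ : ℝ) (z : Fin n → ℝ)
    (G : Matrix (Fin n) (Fin n) ℝ)
    (hG : G = μ • Δ + Ψ + (1 - μ) • D)
    (f : ℝ → ℝ)
    (hf : ∀ α : ℝ, f α = α ^ 2 * (z ⬝ᵥ ((Δ - D) *ᵥ z))
        + α * (z ⬝ᵥ ((D + Ψ - (2 : ℝ) • G) *ᵥ z))) :
    deriv f μ = -(z ⬝ᵥ ((Ψ + D) *ᵥ z)) ∧
    ((Ψ + D).PosDef → z ≠ 0 → deriv f μ < 0) := by
  have hderiv : HasDerivAt f
      (2 * μ * (z ⬝ᵥ ((Δ - D) *ᵥ z)) + z ⬝ᵥ ((D + Ψ - (2 : ℝ) • G) *ᵥ z)) μ := by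
    rw [funext hf]
    exact hasDerivAt_sq_mul_add_mul _ _ μ
  have hderiv_eq : deriv f μ = -(z ⬝ᵥ ((Ψ + D) *ᵥ z)) := by
    rw [hderiv.deriv, ← dotProduct_smul_add_mulVec, hG, ← udpGain,
      two_mul_smul_sub_add_sub_two_smul_udpGain, neg_mulVec, dotProduct_neg]
  refine ⟨hderiv_eq, fun hpd hz => ?_⟩
  rw [hderiv_eq, neg_lt_zero]
  simpa using hpd.dotProduct_mulVec_pos hz

/-- Paper eq. (49) in Lemma 3: the derivative of the UDP attacker objective at
the nominal packet-loss mean `α = μ` equals `-zᵀ(Ψ+D)z`, which is strictly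
negative when `Ψ + D` is positive definite and `z ≠ 0`. -/
theorem udp_deriv_at_nominal_mean {n : ℕ}
    (Δ D Ψ : Matrix (Fin n) (Fin n) ℝ)
    (hΔ : Δ.IsSymm) (hD : D.IsSymm) (hΨ : Ψ.IsSymm)
    (μ : ℝ) (z : Fin n → ℝ)
    (G : Matrix (Fin n) (Fin n) ℝ)
    (hG : G = μ • Δ + Ψ + (1 - μ) • D)
    (f : ℝ → ℝ)
    (hf : ∀ α : ℝ, f α = α ^ 2 * (z ⬝ᵥ ((Δ - D) *ᵥ z))
        + α * (z ⬝ᵥ ((D + Ψ - (2 : ℝ) • G) *ᵥ z))) :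
    deriv f μ = -(z ⬝ᵥ ((Ψ + D) *ᵥ z)) ∧
    ((Ψ + D).PosDef → z ≠ 0 → deriv f μ < 0) :=
  udp_deriv_at_nominal_mean_general Δ D Ψ μ z G hG f hf
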